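/- arXiv:2104.04841 — 4 statements merged into one kernel-verified Lean document; each statement's English description precedes it below -/
import Mathlib

section
/- Let S = 4231213124121312143121312412131231423121312412131214312131241213121 over {1,2,3,4}. Then for every letter x ∈ {1,2,3,4}, the word S·x contains a square, and the word obtained from S by inserting x at the penultimate position (i.e. S'·x·ℓ where S = S'·ℓ and ℓ is the last letter of S) also contains a square. Hence S cannot be extended to a square-free word at its last or penultimate position. -/
/-! Each of the eight extended words contains a square that can be written down explicitly, and
whether a given square occurs in a given word is decided by computation. Since `S` ends in
`1213121`, most of these squares are short and sit at the end of the word; the exception is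
inserting `3` before the last letter, which turns the whole word into the square of the prefix of
`S` of length `34`. -/

def HasSquare (W : List ℕ) : Prop := ∃ X : List ℕ, X ≠ [] ∧ X ++ X <:+: W

def SquareFree (W : List ℕ) : Prop := ¬ HasSquare W

def S : List ℕ :=
  [4, 2, 3, 1, 2, 1, 3, 1, 2, 4, 1, 2, 1, 3, 1, 2, 1, 4, 3, 1, 2, 1, 3, 1, 2, 4, 1, 2, 1, 3, 1, 2, 3,
    1, 4, 2, 3, 1, 2, 1, 3, 1, 2, 4, 1, 2, 1, 3, 1, 2, 1, 4, 3, 1, 2, 1, 3, 1, 2, 4, 1, 2, 1, 3, 1,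
    2, 1]

theorem S_eq_dropLast_append : S = S.dropLast ++ [1] := rfl

theorem hasSquare_S_append {x : ℕ} (hx : x ∈ ({1, 2, 3, 4} : Set ℕ)) : HasSquare (S ++ [x]) := by
  rcases hx with rfl | rfl | rfl | rfl
  · exact ⟨[1], List.cons_ne_nil _ _, by decide⟩
  · exact ⟨[1, 2], List.cons_ne_nil _ _, by decide⟩
  · exact ⟨[1, 2, 1, 3], List.cons_ne_nil _ _, by decide⟩
  · exact ⟨[3, 1, 2, 1, 3, 1, 2, 4, 1, 2, 1, 3, 1, 2, 1, 4], List.cons_ne_nil _ _, by decide⟩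

theorem hasSquare_S_dropLast_append {x : ℕ} (hx : x ∈ ({1, 2, 3, 4} : Set ℕ)) :
    HasSquare (S.dropLast ++ [x, 1]) := by
  rcases hx with rfl | rfl | rfl | rfl
  · exact ⟨[1], List.cons_ne_nil _ _, by decide⟩
  · exact ⟨[2], List.cons_ne_nil _ _, by decide⟩
  · have hsq : S.dropLast ++ [3, 1] = S.take 34 ++ S.take 34 := by decide
    exact ⟨S.take 34, by decide, hsq ▸ List.infix_refl _⟩
  · exact ⟨[1, 2, 1, 3, 1, 2, 4], List.cons_ne_nil _ _, by decide⟩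

theorem S_not_extendable_last_two :
    ∀ x ∈ ({1, 2, 3, 4} : Set ℕ),
      HasSquare ([4, 2, 3, 1, 2, 1, 3, 1, 2, 4, 1, 2, 1, 3, 1, 2, 1, 4, 3, 1, 2, 1, 3, 1, 2, 4, 1, 2, 1, 3, 1, 2, 3, 1, 4, 2, 3, 1, 2, 1, 3, 1, 2, 4, 1, 2, 1, 3, 1, 2, 1, 4, 3, 1, 2, 1, 3, 1, 2, 4, 1, 2, 1, 3, 1, 2, 1] ++ [x]) ∧
      ∀ S' ℓ, ([4, 2, 3, 1, 2, 1, 3, 1, 2, 4, 1, 2, 1, 3, 1, 2, 1, 4, 3, 1, 2, 1, 3, 1, 2, 4, 1, 2, 1, 3, 1, 2, 3, 1, 4, 2, 3, 1, 2, 1, 3, 1, 2, 4, 1, 2, 1, 3, 1, 2, 1, 4, 3, 1, 2, 1, 3, 1, 2, 4, 1, 2, 1, 3, 1, 2, 1] : List ℕ) = S' ++ [ℓ] →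
        HasSquare (S' ++ [x, ℓ]) := by
  intro x hx
  refine ⟨hasSquare_S_append hx, fun S' ℓ h => ?_⟩
  obtain ⟨rfl, hℓ⟩ := List.append_inj' (S_eq_dropLast_append.symm.trans h) rfl
  obtain rfl := List.singleton_inj.mp hℓ
  exact hasSquare_S_dropLast_append hx
end

section
/- For every n ≥ 1, the Zimin word Z_n is square-free. -/
def Zimin : ℕ → List ℕ
  | 0 => []
  | n + 1 => Zimin n ++ (n + 1) :: Zimin n

theorem List.eq_nil_of_prefix_cons_of_not_mem {α : Type*} {u c : List α} {b : α}
    (h : u <+: b :: c) (hb : b ∉ u) : u = [] := by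
  rcases List.prefix_cons_iff.mp h with hu | ⟨t, rfl, -⟩
  · exact hu
  · exact absurd List.mem_cons_self hb

theorem List.IsInfix.infix_or_infix_of_not_mem {α : Type*} {w a c : List α} {b : α}
    (h : w <:+: a ++ b :: c) (hb : b ∉ w) : w <:+: a ∨ w <:+: c := by
  rcases List.infix_append_iff.mp h with ha | hbc | ⟨l₁, l₂, rfl, hl₁, hl₂⟩
  · exact .inl ha
  · rcases List.infix_cons_iff.mp hbc with hpre | hc
    · rw [List.eq_nil_of_prefix_cons_of_not_mem hpre hb]
      exact .inl List.nil_infix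
    · exact .inr hc
  · have hl₂_nil : l₂ = [] :=
      List.eq_nil_of_prefix_cons_of_not_mem hl₂ fun hbl₂ => hb (List.mem_append_right l₁ hbl₂)
    rw [hl₂_nil, List.append_nil]
    exact .inl hl₁.isInfix

theorem squareFree_nil : SquareFree [] := fun ⟨_, hX, hXX⟩ =>
  hX (List.append_eq_nil_iff.mp (List.eq_nil_of_infix_nil hXX)).1

theorem SquareFree.append_cons {a c : List ℕ} {b : ℕ} (ha : SquareFree a) (hc : SquareFree c)
    (hb : (a ++ b :: c).count b = 1) : SquareFree (a ++ b :: c) := by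
  rintro ⟨X, hX, hXX⟩
  by_cases hbX : b ∈ X
  · have htwice : 2 ≤ (X ++ X).count b := by
      rw [List.count_append]
      have := List.count_pos_iff.mpr hbX
      omega
    have := hXX.sublist.count_le b
    omega
  · have hbXX : b ∉ X ++ X := by simpa using hbX
    rcases hXX.infix_or_infix_of_not_mem hbXX with hXa | hXc
    · exact ha ⟨X, hX, hXa⟩
    · exact hc ⟨X, hX, hXc⟩

theorem le_of_mem_zimin {n m : ℕ} (h : m ∈ Zimin n) : m ≤ n := by
  induction n with
  | zero => simp [Zimin] at h
  | succ k ih =>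
    simp only [Zimin, List.mem_append, List.mem_cons] at h
    rcases h with h | rfl | h
    · exact (ih h).trans k.le_succ
    · exact le_rfl
    · exact (ih h).trans k.le_succ

theorem count_zimin_succ (n : ℕ) : (Zimin (n + 1)).count (n + 1) = 1 := by
  have hnot : n + 1 ∉ Zimin n := fun h => (le_of_mem_zimin h).not_gt n.lt_succ_self
  simp [Zimin, List.count_eq_zero.mpr hnot]

theorem zimin_squarefree_general (n : ℕ) : SquareFree (Zimin n) := by
  induction n with
  | zero => exact squareFree_nil
  | succ k ih => exact ih.append_cons ih (count_zimin_succ k)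

theorem zimin_squarefree (n : ℕ) (hn : 1 ≤ n) : SquareFree (Zimin n) :=
  zimin_squarefree_general n
end

section
/- For n ≥ 2, the number of internal positions i (with 1 ≤ i ≤ 2^n − 2, meaning insertion strictly between the i-th and (i+1)-th letters of Z_n) such that inserting the letter n at position i into the Zimin word Z_n yields a square-free word is exactly (2^n − 2) − 2(n − 1). -/
def insertAt (W : List ℕ) (p x : ℕ) : List ℕ := W.take p ++ x :: W.drop p

local notation "ν" => padicValNat 2

theorem pow_padicValNat_le {p d : ℕ} (hd : d ≠ 0) : p ^ padicValNat p d ≤ d :=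
  Nat.le_of_dvd (Nat.pos_of_ne_zero hd) pow_padicValNat_dvd

theorem padicValNat_add_of_dvd_of_lt {p M t k : ℕ} [Fact p.Prime] (hM : p ^ k ∣ M)
    (ht₀ : t ≠ 0) (ht : t < p ^ k) : padicValNat p (M + t) = padicValNat p t := by
  have hlt : padicValNat p t < k := (Nat.pow_lt_pow_iff_right (Fact.out : p.Prime).one_lt).mp
    ((pow_padicValNat_le ht₀).trans_lt ht)
  have hM' : p ^ (padicValNat p t + 1) ∣ M := (pow_dvd_pow p hlt).trans hM
  apply le_antisymm
  · by_contra! h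
    have h' : p ^ (padicValNat p t + 1) ∣ M + t :=
      (padicValNat_dvd_iff_le (by omega)).mpr h
    exact pow_succ_padicValNat_not_dvd ht₀ ((Nat.dvd_add_right hM').mp h')
  · exact (padicValNat_dvd_iff_le (by omega)).mp
      (dvd_add ((pow_dvd_pow p (by omega)).trans hM') pow_padicValNat_dvd)

theorem padicValNat_two_pow_mul {k x : ℕ} (hx : x ≠ 0) : ν (2 ^ k * x) = k + ν x := by
  rw [padicValNat.mul (by positivity) hx, padicValNat.prime_pow]

theorem padicValNat_two_add_ne_of_dvd {j d : ℕ} (hj : j ≠ 0) (hd : d ≠ 0)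
    (h : 2 ^ ν d ∣ j) : ν (j + d) ≠ ν j := by
  obtain ⟨k, v, hv, rfl⟩ := Nat.exists_eq_two_pow_mul_odd hd
  have hv₀ : v ≠ 0 := by rintro rfl; simp at hv
  rw [padicValNat_two_pow_mul hv₀, padicValNat.eq_zero_of_not_dvd hv.not_two_dvd_nat,
    add_zero] at h
  obtain ⟨w, rfl⟩ := h
  have hw₀ : w ≠ 0 := by rintro rfl; simp at hj
  rw [← mul_add, padicValNat_two_pow_mul hw₀, padicValNat_two_pow_mul (by omega)]
  -- As `v` is odd, exactly one of `w` and `w + v` is odd.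
  rcases Nat.even_or_odd w with hw | hw
  · rw [padicValNat.eq_zero_of_not_dvd (hw.add_odd hv).not_two_dvd_nat]
    have := one_le_padicValNat_of_dvd hw₀ (even_iff_two_dvd.mp hw)
    omega
  · rw [padicValNat.eq_zero_of_not_dvd hw.not_two_dvd_nat]
    have := one_le_padicValNat_of_dvd (by omega : w + v ≠ 0)
      (even_iff_two_dvd.mp (hw.add_odd hv))
    omega

def RulerRun (a d L : ℕ) : Prop := ∀ j, a ≤ j → j < a + L → ν (j + d) = ν j

namespace RulerRun

variable {a d L : ℕ}

theorem lt_two_pow (h : RulerRun a d L) (ha : a ≠ 0) (hd : d ≠ 0) : L < 2 ^ ν d := by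
  set M := 2 ^ ν d
  have hM : 0 < M := by positivity
  by_contra! hL
  -- the multiple of `M` in `[a, a + M)`
  set j := (a + M - 1) - (a + M - 1) % M
  have hj : a ≤ j ∧ j < a + M := by
    have := Nat.mod_lt (a + M - 1) hM
    have := Nat.mod_le (a + M - 1) M
    omega
  exact padicValNat_two_add_ne_of_dvd (by omega) hd (Nat.dvd_sub_mod _)
    (h j hj.1 (by omega))

theorem lt_self (h : RulerRun a d L) (ha : a ≠ 0) (hd : d ≠ 0) : L < d :=
  (h.lt_two_pow ha hd).trans_le (pow_padicValNat_le hd)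

end RulerRun

theorem exists_eq_two_pow_of_rulerRun {a b d L₁ L₂ : ℕ} (ha : a ≠ 0) (hb : b ≠ 0)
    (hL : L₁ + L₂ + 1 = d) (h₁ : RulerRun a (d - 1) L₁) (h₂ : RulerRun b d L₂) :
    ∃ k, d = 2 ^ k := by
  -- Of `d - 1` and `d` one is odd, and a run of odd shift is empty.
  rcases Nat.even_or_odd d with hd | hd
  · have hd₁ : Odd (d - 1) := Nat.Even.sub_odd (by omega) hd odd_one
    have hL₁ := h₁.lt_two_pow ha (by rintro h; simp [h] at hd₁)
    have := h₂.lt_two_pow hb (by omega)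
    have := pow_padicValNat_le (p := 2) (d := d) (by omega)
    rw [padicValNat.eq_zero_of_not_dvd hd₁.not_two_dvd_nat] at hL₁
    exact ⟨ν d, by omega⟩
  · have := h₂.lt_two_pow hb (by omega)
    rw [padicValNat.eq_zero_of_not_dvd hd.not_two_dvd_nat] at this
    rcases eq_or_ne d 1 with rfl | hd₁
    · exact ⟨0, rfl⟩
    · have := h₁.lt_self ha (by omega)
      omega

theorem zimin_eq_map_range (n : ℕ) :
    Zimin n = (List.range (2 ^ n - 1)).map (fun j => ν (j + 1) + 1) := by
  induction n with
  | zero => rfl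
  | succ n ih =>
    have h₁ : 1 ≤ 2 ^ n := Nat.one_le_two_pow
    rw [Zimin, pow_succ, show 2 ^ n * 2 - 1 = (2 ^ n - 1) + (2 ^ n - 1 + 1) by omega,
      List.range_add, List.range_succ_eq_map, ih]
    simp only [List.map_append, List.map_cons, List.map_map]
    congr 2
    · rw [Nat.sub_add_cancel h₁, padicValNat.prime_pow]
    · refine List.map_congr_left fun t ht => ?_
      rw [List.mem_range] at ht
      simp only [Function.comp_apply, Nat.succ_eq_add_one]
      rw [show 2 ^ n - 1 + (t + 1) + 1 = 2 ^ n + (t + 1) by omega,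
        padicValNat_add_of_dvd_of_lt dvd_rfl (by omega) (by omega)]

theorem insertAt_map_range {f : ℕ → ℕ} {N i x : ℕ} (hi : i ≤ N) :
    insertAt ((List.range N).map f) i x =
      (List.range (N + 1)).map
        (fun j => if j < i then f j else if j = i then x else f (j - 1)) := by
  refine List.ext_getElem (by simp [insertAt]; omega) fun j h₁ h₂ => ?_
  simp only [insertAt, List.getElem_map, List.getElem_range]
  rcases lt_trichotomy j i with hj | rfl | hj
  · rw [List.getElem_append_left (by simp; omega)]
    simp [hj]
  · rw [List.getElem_append_right (by simp)]
    simp [min_eq_left hi]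
  · rw [List.getElem_append_right (by simp; omega)]
    simp [List.getElem_cons, hj.ne', hj.not_gt, min_eq_left hi,
      show j - i ≠ 0 by omega, show i + (j - i - 1) = j - 1 by omega]


theorem hasSquare_map_range_iff (f : ℕ → ℕ) (N : ℕ) :
    HasSquare ((List.range N).map f) ↔
      ∃ s d, 0 < d ∧ s + 2 * d ≤ N ∧ ∀ t < d, f (s + t + d) = f (s + t) := by
  simp only [HasSquare, List.infix_iff_getElem?, List.length_append, List.length_map,
    List.length_range]
  constructor
  · rintro ⟨X, hX, s, hs, hXX⟩
    refine ⟨s, X.length, List.length_pos_iff.mpr hX, by omega, fun t ht => ?_⟩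
    have h₁ := hXX t (by omega)
    have h₂ := hXX (t + X.length) (by omega)
    simp only [List.getElem?_map, List.getElem?_range (show t + s < N by omega),
      List.getElem?_range (show t + X.length + s < N by omega), Option.map_some,
      Option.some.injEq, List.getElem_append_left ht,
      List.getElem_append_right (Nat.le_add_left X.length t), Nat.add_sub_cancel] at h₁ h₂
    rw [show s + t + X.length = t + X.length + s by omega, h₂, ← h₁, Nat.add_comm]
  · rintro ⟨s, d, hd, hs, hsq⟩
    refine ⟨(List.range d).map (fun t => f (s + t)), by simp; omega, s, by simp; omega,
      fun i hi => ?_⟩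
    simp only [List.length_map, List.length_range] at hi
    rw [List.getElem?_map, List.getElem?_range (by omega), Option.map_some, List.getElem_append]
    simp only [List.length_map, List.length_range]
    split_ifs with h
    · simp [Nat.add_comm]
    · simp only [List.getElem_map, List.getElem_range]
      rw [← hsq (i - d) (by omega), show s + (i - d) + d = i + s by omega]

theorem eq_two_pow_of_padicValNat_eq {n x : ℕ} (hx₀ : x ≠ 0) (hx : x < 2 ^ (n + 1))
    (h : ν x = n) : x = 2 ^ n := by
  obtain ⟨c, rfl⟩ : 2 ^ n ∣ x := h ▸ pow_padicValNat_dvd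
  have : c < 2 := by rw [pow_succ] at hx; exact Nat.lt_of_mul_lt_mul_left hx
  interval_cases c <;> simp_all

def ziminInsertLetter (n i j : ℕ) : ℕ :=
  if j < i then ν (j + 1) + 1 else if j = i then n else ν j + 1

theorem insertAt_zimin_eq_map_range {n i : ℕ} (hi : i < 2 ^ n) :
    insertAt (Zimin n) i n = (List.range (2 ^ n)).map (ziminInsertLetter n i) := by
  rw [zimin_eq_map_range, insertAt_map_range (show i ≤ 2 ^ n - 1 by omega),
    Nat.sub_add_cancel Nat.one_le_two_pow]
  refine List.map_congr_left fun j _ => ?_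
  unfold ziminInsertLetter
  split_ifs <;> first | rfl | rw [Nat.sub_add_cancel (by omega)]

section ziminInsertLetter

variable {n i j : ℕ}

theorem ziminInsertLetter_of_lt (h : j < i) : ziminInsertLetter n i j = ν (j + 1) + 1 :=
  if_pos h

theorem ziminInsertLetter_self : ziminInsertLetter n i i = n := by
  simp [ziminInsertLetter]

theorem ziminInsertLetter_of_gt (h : i < j) : ziminInsertLetter n i j = ν j + 1 := by
  simp [ziminInsertLetter, h.not_gt, h.ne']

theorem eq_of_ziminInsertLetter_eq (hi : i < 2 ^ (n + 1)) (hj : j < 2 ^ (n + 1))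
    (h : ziminInsertLetter (n + 1) i j = n + 1) :
    (j < i ∧ j + 1 = 2 ^ n) ∨ j = i ∨ (i < j ∧ j = 2 ^ n) := by
  rcases lt_trichotomy j i with hji | rfl | hij
  · rw [ziminInsertLetter_of_lt hji, add_left_inj] at h
    exact .inl ⟨hji, eq_two_pow_of_padicValNat_eq (by omega) (by omega) h⟩
  · exact .inr (.inl rfl)
  · rw [ziminInsertLetter_of_gt hij, add_left_inj] at h
    exact .inr (.inr ⟨hij, eq_two_pow_of_padicValNat_eq (by omega) hj h⟩)

end ziminInsertLetter

theorem square_contains_insertion {n i s d : ℕ} (hd : d ≠ 0)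
    (hsq : ∀ t < d, ziminInsertLetter n i (s + t + d) = ziminInsertLetter n i (s + t)) :
    s ≤ i ∧ i < s + 2 * d := by
  constructor
  · by_contra! h
    have hrun : RulerRun s d d := fun j hj₁ hj₂ => by
      have := hsq (j - s) (by omega)
      rwa [ziminInsertLetter_of_gt (by omega), ziminInsertLetter_of_gt (by omega),
        show s + (j - s) = j by omega, add_left_inj] at this
    exact (hrun.lt_self (by omega) hd).false
  · by_contra! h
    have hrun : RulerRun (s + 1) d d := fun j hj₁ hj₂ => by
      have := hsq (j - 1 - s) (by omega)
      rwa [ziminInsertLetter_of_lt (by omega), ziminInsertLetter_of_lt (by omega),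
        show s + (j - 1 - s) + d + 1 = j + d by omega, show s + (j - 1 - s) + 1 = j by omega,
        add_left_inj] at this
    exact (hrun.lt_self (by omega) hd).false

section square

variable {n i s d : ℕ}
  (hsq : ∀ t < d, ziminInsertLetter (n + 1) i (s + t + d) = ziminInsertLetter (n + 1) i (s + t))
  (hlen : s + 2 * d ≤ 2 ^ (n + 1))
include hsq hlen

theorem square_first_half (hs : s ≤ i) (hi : i < s + d) : i + d = 2 ^ n ∧ ∃ k, d = 2 ^ k := by
  have hpair := hsq (i - s) (by omega)
  rw [show s + (i - s) = i by omega, ziminInsertLetter_self] at hpair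
  -- The pairs before the inserted letter straddle it, which shortens their shift to `d - 1`.
  have hrun₁ : RulerRun (s + 1) (d - 1) (i - s) := fun j hj₁ hj₂ => by
    have := hsq (j - 1 - s) (by omega)
    rwa [ziminInsertLetter_of_gt (by omega), ziminInsertLetter_of_lt (by omega),
      show s + (j - 1 - s) + d = j + (d - 1) by omega, show s + (j - 1 - s) + 1 = j by omega,
      add_left_inj] at this
  have hrun₂ : RulerRun (i + 1) d (s + d - 1 - i) := fun j hj₁ hj₂ => by
    have := hsq (j - s) (by omega)
    rwa [ziminInsertLetter_of_gt (by omega), ziminInsertLetter_of_gt (by omega),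
      show s + (j - s) = j by omega, add_left_inj] at this
  refine ⟨?_, exists_eq_two_pow_of_rulerRun (by omega) (by omega) (by omega) hrun₁ hrun₂⟩
  rcases eq_of_ziminInsertLetter_eq (by omega) (by omega) hpair with h | h | h <;> omega

theorem square_second_half (hs : s + d ≤ i) (hi : i < s + 2 * d) :
    i + 1 = 2 ^ n + d ∧ ∃ k, d = 2 ^ k := by
  have hpair := hsq (i - s - d) (by omega)
  rw [show s + (i - s - d) + d = i by omega, ziminInsertLetter_self] at hpair
  have hrun₁ : RulerRun (i - d + 2) (d - 1) (s + 2 * d - 1 - i) := fun j hj₁ hj₂ => by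
    have := hsq (j - 1 - s) (by omega)
    rwa [ziminInsertLetter_of_gt (by omega), ziminInsertLetter_of_lt (by omega),
      show s + (j - 1 - s) + d = j + (d - 1) by omega, show s + (j - 1 - s) + 1 = j by omega,
      add_left_inj] at this
  have hrun₂ : RulerRun (s + 1) d (i - s - d) := fun j hj₁ hj₂ => by
    have := hsq (j - 1 - s) (by omega)
    rwa [ziminInsertLetter_of_lt (by omega), ziminInsertLetter_of_lt (by omega),
      show s + (j - 1 - s) + d + 1 = j + d by omega, show s + (j - 1 - s) + 1 = j by omega,
      add_left_inj] at this
  refine ⟨?_, exists_eq_two_pow_of_rulerRun (by omega) (by omega) (by omega) hrun₁ hrun₂⟩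
  rcases eq_of_ziminInsertLetter_eq (by omega) (by omega) hpair.symm with h | h | h <;> omega

end square

section backward

variable {n k : ℕ}

theorem hasSquare_insertAt_zimin_sub (hk : k < n) :
    HasSquare (insertAt (Zimin (n + 1)) (2 ^ n - 2 ^ k) (n + 1)) := by
  have hlt : 2 ^ k < 2 ^ n := Nat.pow_lt_pow_right one_lt_two hk
  have hdvd : 2 ^ k ∣ 2 ^ n := pow_dvd_pow 2 hk.le
  have hn : 2 ^ (n + 1) = 2 ^ n + 2 ^ n := by rw [pow_succ]; omega
  rw [insertAt_zimin_eq_map_range (by omega), hasSquare_map_range_iff]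
  refine ⟨2 ^ n - 2 ^ k, 2 ^ k, by positivity, by omega, fun t ht => ?_⟩
  rcases Nat.eq_zero_or_pos t with rfl | ht₀
  · rw [add_zero, Nat.sub_add_cancel hlt.le, ziminInsertLetter_self,
      ziminInsertLetter_of_gt (by omega), padicValNat.prime_pow]
  · rw [ziminInsertLetter_of_gt (by omega), ziminInsertLetter_of_gt (by omega),
      show 2 ^ n - 2 ^ k + t + 2 ^ k = 2 ^ n + t by omega,
      padicValNat_add_of_dvd_of_lt hdvd (by omega) ht,
      padicValNat_add_of_dvd_of_lt (Nat.dvd_sub hdvd dvd_rfl) (by omega) ht]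

theorem hasSquare_insertAt_zimin_add (hk : k < n) :
    HasSquare (insertAt (Zimin (n + 1)) (2 ^ n - 1 + 2 ^ k) (n + 1)) := by
  have hlt : 2 ^ k < 2 ^ n := Nat.pow_lt_pow_right one_lt_two hk
  have hdvd : 2 ^ k ∣ 2 ^ n := pow_dvd_pow 2 hk.le
  have hn : 2 ^ (n + 1) = 2 ^ n + 2 ^ n := by rw [pow_succ]; omega
  rw [insertAt_zimin_eq_map_range (by omega), hasSquare_map_range_iff]
  refine ⟨2 ^ n - 2 ^ k, 2 ^ k, by positivity, by omega, fun t ht => ?_⟩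
  rw [ziminInsertLetter_of_lt (j := 2 ^ n - 2 ^ k + t) (by omega),
    show 2 ^ n - 2 ^ k + t + 1 = 2 ^ n - 2 ^ k + (t + 1) by omega]
  rcases Nat.lt_or_ge (t + 1) (2 ^ k) with ht₁ | ht₁
  · rw [ziminInsertLetter_of_lt (by omega),
      show 2 ^ n - 2 ^ k + t + 2 ^ k + 1 = 2 ^ n + (t + 1) by omega,
      padicValNat_add_of_dvd_of_lt hdvd (by omega) ht₁,
      padicValNat_add_of_dvd_of_lt (Nat.dvd_sub hdvd dvd_rfl) (by omega) ht₁]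
  · rw [show 2 ^ n - 2 ^ k + t + 2 ^ k = 2 ^ n - 1 + 2 ^ k by omega, ziminInsertLetter_self,
      show 2 ^ n - 2 ^ k + (t + 1) = 2 ^ n by omega, padicValNat.prime_pow]

end backward

def ziminSquarePositions (n : ℕ) : Finset ℕ :=
  (Finset.range n).image (fun k => 2 ^ n - 2 ^ k) ∪
    (Finset.range n).image (fun k => 2 ^ n - 1 + 2 ^ k)

theorem hasSquare_insertAt_zimin_iff {n i : ℕ} (hi₀ : 1 ≤ i) (hi : i ≤ 2 ^ (n + 1) - 2) :
    HasSquare (insertAt (Zimin (n + 1)) i (n + 1)) ↔ i ∈ ziminSquarePositions n := by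
  simp only [ziminSquarePositions, Finset.mem_union, Finset.mem_image, Finset.mem_range]
  constructor
  · rw [insertAt_zimin_eq_map_range (by omega), hasSquare_map_range_iff]
    rintro ⟨s, d, hd, hlen, hsq⟩
    obtain ⟨hs, hi'⟩ := square_contains_insertion hd.ne' hsq
    have hn : 2 ^ (n + 1) = 2 ^ n + 2 ^ n := by rw [pow_succ]; omega
    rcases Nat.lt_or_ge i (s + d) with h | h
    · obtain ⟨hid, k, rfl⟩ := square_first_half hsq hlen hs h
      exact .inl ⟨k, (Nat.pow_lt_pow_iff_right one_lt_two).mp (by omega), by omega⟩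
    · obtain ⟨hid, k, rfl⟩ := square_second_half hsq hlen h hi'
      exact .inr ⟨k, (Nat.pow_lt_pow_iff_right one_lt_two).mp (by omega), by omega⟩
  · rintro (⟨k, hk, rfl⟩ | ⟨k, hk, rfl⟩)
    exacts [hasSquare_insertAt_zimin_sub hk, hasSquare_insertAt_zimin_add hk]

theorem ziminSquarePositions_subset (n : ℕ) :
    ziminSquarePositions n ⊆ Finset.Icc 1 (2 ^ (n + 1) - 2) := by
  intro i hi
  simp only [ziminSquarePositions, Finset.mem_union, Finset.mem_image, Finset.mem_range] at hi
  have hn : 2 ^ (n + 1) = 2 ^ n + 2 ^ n := by rw [pow_succ]; omega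
  rw [Finset.mem_Icc]
  rcases hi with ⟨k, hk, rfl⟩ | ⟨k, hk, rfl⟩ <;>
    have := Nat.pow_lt_pow_right one_lt_two hk <;> have := Nat.one_le_two_pow (n := k) <;> omega

theorem card_ziminSquarePositions (n : ℕ) : (ziminSquarePositions n).card = 2 * n := by
  have hpow : ∀ k ∈ Finset.range n, 2 ^ k < 2 ^ n := fun k hk =>
    Nat.pow_lt_pow_right one_lt_two (Finset.mem_range.mp hk)
  rw [ziminSquarePositions, Finset.card_union_of_disjoint, Finset.card_image_of_injOn,
    Finset.card_image_of_injective _ fun a b h => Nat.pow_right_injective le_rfl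
      (Nat.add_left_cancel h),
    Finset.card_range, two_mul]
  · intro a ha b hb hab
    have := hpow a ha
    have := hpow b hb
    exact Nat.pow_right_injective le_rfl (show 2 ^ a = 2 ^ b by simp only at hab; omega)
  · simp only [Finset.disjoint_left, Finset.mem_image]
    rintro _ ⟨a, -, rfl⟩ ⟨b, -, hab⟩
    have : 2 ^ n - 1 + 2 ^ b = 2 ^ n - 2 ^ a := hab
    have := Nat.one_le_two_pow (n := a)
    have := Nat.one_le_two_pow (n := b)
    omega

theorem setOf_squareFree_insertAt_zimin (n : ℕ) :
    {i : ℕ | 1 ≤ i ∧ i ≤ 2 ^ (n + 1) - 2 ∧ SquareFree (insertAt (Zimin (n + 1)) i (n + 1))} =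
      ↑(Finset.Icc 1 (2 ^ (n + 1) - 2) \ ziminSquarePositions n) := by
  ext i
  simp only [Set.mem_ofPred_eq, Finset.coe_sdiff, Set.mem_sdiff, Finset.coe_Icc, Set.mem_Icc,
    Finset.mem_coe, SquareFree, and_assoc]
  exact and_congr_right fun hi₀ => and_congr_right fun hi =>
    not_congr (hasSquare_insertAt_zimin_iff hi₀ hi)

theorem zimin_internal_n_insertions (n : ℕ) (hn : 2 ≤ n) :
    {i : ℕ | 1 ≤ i ∧ i ≤ 2 ^ n - 2 ∧ SquareFree (insertAt (Zimin n) i n)}.ncard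
      = (2 ^ n - 2) - 2 * (n - 1) := by
  obtain ⟨n, rfl⟩ : ∃ k, n = k + 1 := ⟨n - 1, by omega⟩
  rw [setOf_squareFree_insertAt_zimin, Set.ncard_coe_finset,
    Finset.card_sdiff_of_subset (ziminSquarePositions_subset n), Nat.card_Icc,
    card_ziminSquarePositions]
  omega
end

section
/- For every n ≥ 4, the square-free potential of Zimin words satisfies the recursion AE(Z_n) = 2^n − 2n + 2·AE(Z_{n−1}), where AE(Z_n) is the number of pairs (insertion position, letter from {1,...,n}) whose insertion into Z_n yields a square-free word. -/
noncomputable def AE (n : ℕ) (W : List ℕ) : ℕ :=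
  {q : ℕ × ℕ | q.1 ≤ W.length ∧ 1 ≤ q.2 ∧ q.2 ≤ n ∧ SquareFree (insertAt W q.1 q.2)}.ncard

noncomputable def ae (n : ℕ) (W : List ℕ) : ℕ :=
  {q : ℕ × ℕ | 1 ≤ q.1 ∧ q.1 < W.length ∧ 1 ≤ q.2 ∧ q.2 ≤ n ∧
    SquareFree (insertAt W q.1 q.2)}.ncard


/-!
The letter `k + 1` occurs exactly once in `Z_{k+1} = Z_k (k+1) Z_k`, and a square can never
contain a letter that occurs only once. So inserting a letter `x ≤ k` keeps `Z_{k+1}`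
square-free iff inserting it into the corresponding copy of `Z_k` does, which gives
`2 · AE(Z_k)`.

Inserting `k + 1` at a position of the left half gives `A (k+1) B (k+1) Z_k` with `A B = Z_k`.
A square then has the form `(U (k+1) V)²` with `U` a suffix of `A`, `V` a prefix of `Z_k` and
`B = V U`. Since `Z_k` is square-free and begins and ends with `1`, `U` is empty, so `B` is a
border of `Z_k`, hence one of `Z_0, …, Z_k`. Thus exactly `k + 1` positions of each half are
bad (the right half is symmetric because `Z_{k+1}` is a palindrome), and the top letter
contributes `2^{k+1} - 2(k+1)`.
-/

namespace List

variable {α : Type*} {a : α}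

theorem append_cons_inj_of_notMem_left {l₁ l₂ l₃ l₄ : List α} (h₁ : a ∉ l₁) (h₃ : a ∉ l₃)
    (h : l₁ ++ a :: l₂ = l₃ ++ a :: l₄) : l₁ = l₃ ∧ l₂ = l₄ := by
  induction l₁ generalizing l₃ with
  | nil =>
    cases l₃ with
    | nil => simpa using h
    | cons c l₃ => simp only [nil_append, cons_append, cons.injEq] at h; simp [h.1] at h₃
  | cons b l₁ ih =>
    cases l₃ with
    | nil => simp only [nil_append, cons_append, cons.injEq] at h; simp [h.1] at h₁
    | cons c l₃ =>
      simp only [cons_append, cons.injEq, mem_cons, not_or] at h h₁ h₃ ⊢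
      exact ⟨⟨h.1, (ih h₁.2 h₃.2 h.2).1⟩, (ih h₁.2 h₃.2 h.2).2⟩

theorem infix_or_infix_of_infix_append_cons {l l₁ l₂ : List α} (ha : a ∉ l)
    (h : l <:+: l₁ ++ a :: l₂) : l <:+: l₁ ∨ l <:+: l₂ := by
  rcases infix_append_iff.mp h with h | h | ⟨m₁, m₂, rfl, hm₁, hm₂⟩
  · exact .inl h
  · rcases infix_cons_iff.mp h with h | h
    · rcases prefix_cons_iff.mp h with rfl | ⟨t, rfl, -⟩
      · exact .inl (nil_infix ..)
      · simp at ha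
    · exact .inr h
  · rcases prefix_cons_iff.mp hm₂ with rfl | ⟨t, rfl, -⟩
    · exact .inl (by simpa using hm₁.isInfix)
    · simp at ha

end List

theorem HasSquare.mono {U V : List ℕ} (h : HasSquare U) (hUV : U <:+: V) : HasSquare V :=
  let ⟨X, hX, hXU⟩ := h
  ⟨X, hX, hXU.trans hUV⟩

theorem SquareFree.of_infix {U V : List ℕ} (h : SquareFree V) (hUV : U <:+: V) :
    SquareFree U :=
  fun hU => h (hU.mono hUV)

theorem hasSquare_reverse_iff {W : List ℕ} : HasSquare W.reverse ↔ HasSquare W := by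
  suffices ∀ W : List ℕ, HasSquare W → HasSquare W.reverse from
    ⟨fun h => by simpa using this _ h, this W⟩
  rintro W ⟨X, hX, hXW⟩
  exact ⟨X.reverse, by simpa using hX, by simpa using List.reverse_infix.mpr hXW⟩

theorem hasSquare_append_cons_iff {U V : List ℕ} {c : ℕ} (hU : c ∉ U) (hV : c ∉ V) :
    HasSquare (U ++ c :: V) ↔ HasSquare U ∨ HasSquare V := by
  refine ⟨fun ⟨X, hX, hXW⟩ => ?_, ?_⟩
  · have hcX : c ∉ X := by
      intro hc
      have hle := hXW.count_le c
      have hpos : 0 < X.count c := List.count_pos_iff.mpr hc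
      simp only [List.count_append, List.count_cons_self, List.count_eq_zero.mpr hU,
        List.count_eq_zero.mpr hV] at hle
      omega
    exact (List.infix_or_infix_of_infix_append_cons (by simp [hcX]) hXW).imp
      (fun h => ⟨X, hX, h⟩) (fun h => ⟨X, hX, h⟩)
  · rintro (h | h)
    · exact h.mono List.infix_append_left
    · exact h.mono ((List.suffix_cons _ _).isInfix.trans List.infix_append_right)

theorem hasSquare_append_cons_append_cons_iff {A B C : List ℕ} {c : ℕ}
    (hA : c ∉ A) (hB : c ∉ B) (hC : c ∉ C)
    (sA : SquareFree A) (sB : SquareFree B) (sC : SquareFree C) :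
    HasSquare (A ++ c :: (B ++ c :: C)) ↔ ∃ U V, U <:+ A ∧ V <+: C ∧ B = V ++ U := by
  constructor
  · rintro ⟨X, hX, s, t, h⟩
    by_cases hcX : c ∉ X
    · have hcXX : c ∉ X ++ X := by simp [hcX]
      exfalso
      rcases List.infix_or_infix_of_infix_append_cons hcXX ⟨s, t, h⟩ with h | h
      · exact sA ⟨X, hX, h⟩
      rcases List.infix_or_infix_of_infix_append_cons hcXX h with h | h
      · exact sB ⟨X, hX, h⟩
      · exact sC ⟨X, hX, h⟩
    obtain ⟨U, V, rfl⟩ := List.append_of_mem (not_not.mp hcX)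
    -- `c` occurs twice in the word, so once in `X` and nowhere else.
    have hcount := congrArg (List.count c) h
    simp only [List.count_append, List.count_cons_self, List.count_eq_zero.mpr hA,
      List.count_eq_zero.mpr hB, List.count_eq_zero.mpr hC] at hcount
    have hs : c ∉ s := List.count_eq_zero.mp (by omega)
    have hU : c ∉ U := List.count_eq_zero.mp (by omega)
    have hV : c ∉ V := List.count_eq_zero.mp (by omega)
    have h' : (s ++ U) ++ c :: ((V ++ U) ++ c :: (V ++ t)) = A ++ c :: (B ++ c :: C) := by
      rw [← h]; simp
    obtain ⟨hsU, h'⟩ := List.append_cons_inj_of_notMem_left (by simp [hs, hU]) hA h'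
    obtain ⟨hVU, hVt⟩ := List.append_cons_inj_of_notMem_left (by simp [hU, hV]) hB h'
    exact ⟨U, V, ⟨s, hsU⟩, ⟨t, hVt⟩, hVU.symm⟩
  · rintro ⟨U, V, ⟨s, rfl⟩, ⟨t, rfl⟩, rfl⟩
    exact ⟨U ++ c :: V, by simp, s, t, by simp⟩

section InsertAt

variable {A B W : List ℕ} {c p x y : ℕ}

theorem mem_insertAt : y ∈ insertAt W p x ↔ y = x ∨ y ∈ W := by
  conv_rhs => rw [← List.take_append_drop p W]
  simp only [insertAt, List.mem_append, List.mem_cons]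
  tauto

theorem insertAt_append_of_le_length (hp : p ≤ A.length) :
    insertAt (A ++ B) p x = insertAt A p x ++ B := by
  simp [insertAt, List.take_append, List.drop_append, Nat.sub_eq_zero_of_le hp]

theorem insertAt_append_add : insertAt (A ++ B) (A.length + p) x = A ++ insertAt B p x := by
  simp [insertAt, List.take_append, List.drop_append, List.take_of_length_le,
    List.drop_eq_nil_of_le]

theorem insertAt_append_cons_add :
    insertAt (A ++ c :: B) (A.length + 1 + p) x = A ++ c :: insertAt B p x := by
  simpa using insertAt_append_add (A := A ++ [c]) (B := B) (p := p) (x := x)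

theorem reverse_insertAt :
    (insertAt W p x).reverse = insertAt W.reverse (W.length - p) x := by
  simp [insertAt, List.reverse_take, List.reverse_drop]

theorem hasSquare_insertAt_iff_of_reverse_eq (hW : W.reverse = W) :
    HasSquare (insertAt W p x) ↔ HasSquare (insertAt W (W.length - p) x) := by
  rw [← hasSquare_reverse_iff, reverse_insertAt, hW]

end InsertAt

theorem zimin_succ (k : ℕ) : Zimin (k + 1) = Zimin k ++ (k + 1) :: Zimin k := rfl

theorem length_zimin (k : ℕ) : (Zimin k).length = 2 ^ k - 1 := by
  induction k with
  | zero => rfl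
  | succ k ih =>
    have := Nat.one_le_two_pow (n := k)
    simp only [zimin_succ, List.length_append, List.length_cons, ih, pow_succ]
    omega

theorem length_zimin_add_one (k : ℕ) : (Zimin k).length + 1 = 2 ^ k := by
  rw [length_zimin]
  exact Nat.sub_add_cancel Nat.one_le_two_pow

theorem le_of_mem_zimin_s14 {k x : ℕ} (h : x ∈ Zimin k) : x ≤ k := by
  induction k with
  | zero => simp [Zimin] at h
  | succ k ih =>
    simp only [zimin_succ, List.mem_append, List.mem_cons] at h
    rcases h with h | rfl | h
    · exact (ih h).trans k.le_succ
    · rfl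
    · exact (ih h).trans k.le_succ

theorem succ_notMem_zimin (k : ℕ) : k + 1 ∉ Zimin k :=
  fun h => by have := le_of_mem_zimin_s14 h; omega

theorem reverse_zimin (k : ℕ) : (Zimin k).reverse = Zimin k := by
  induction k with
  | zero => rfl
  | succ k ih => simp [zimin_succ, ih]

theorem zimin_squareFree (k : ℕ) : SquareFree (Zimin k) := by
  induction k with
  | zero =>
    rintro ⟨X, hX, hXX⟩
    exact hX (List.eq_nil_of_infix_nil (List.infix_append_left.trans hXX))
  | succ k ih =>
    rw [SquareFree, zimin_succ,
      hasSquare_append_cons_iff (succ_notMem_zimin k) (succ_notMem_zimin k)]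
    tauto

theorem zimin_prefix_zimin {t k : ℕ} (h : t ≤ k) : Zimin t <+: Zimin k := by
  induction k, h using Nat.le_induction with
  | base => exact List.prefix_refl _
  | succ k _ ih => exact ih.trans (List.prefix_append _ _)

theorem zimin_suffix_zimin {t k : ℕ} (h : t ≤ k) : Zimin t <:+ Zimin k := by
  induction k, h using Nat.le_induction with
  | base => exact List.suffix_refl _
  | succ k _ ih => exact ih.trans ((List.suffix_cons _ _).trans (List.suffix_append _ _))

theorem zimin_succ_eq_cons (k : ℕ) : ∃ l, Zimin (k + 1) = 1 :: l := by
  induction k with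
  | zero => exact ⟨[], rfl⟩
  | succ k ih =>
    obtain ⟨l, hl⟩ := ih
    exact ⟨_, by rw [zimin_succ, hl, List.cons_append]⟩

theorem zimin_succ_eq_concat (k : ℕ) : ∃ l, Zimin (k + 1) = l ++ [1] := by
  obtain ⟨l, hl⟩ := zimin_succ_eq_cons k
  exact ⟨l.reverse, by rw [← reverse_zimin, hl, List.reverse_cons]⟩

theorem exists_eq_zimin_of_prefix_of_suffix {k : ℕ} {B : List ℕ} (hp : B <+: Zimin k)
    (hs : B <:+ Zimin k) : ∃ t ≤ k, B = Zimin t := by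
  induction k generalizing B with
  | zero => exact ⟨0, le_rfl, List.prefix_nil.mp hp⟩
  | succ k ih =>
    rw [zimin_succ] at hp hs
    by_cases hB : B.length ≤ (Zimin k).length
    · obtain ⟨t, ht, rfl⟩ := ih (List.prefix_of_prefix_length_le hp (List.prefix_append _ _) hB)
        (List.suffix_of_suffix_length_le hs
          ((List.suffix_cons _ _).trans (List.suffix_append _ _)) hB)
      exact ⟨t, by omega, rfl⟩
    -- A longer border has the unique letter `k + 1` at the same place from both ends.
    refine ⟨k + 1, le_rfl, ?_⟩
    obtain ⟨C, rfl⟩ : Zimin k ++ [k + 1] <+: B :=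
      List.prefix_of_prefix_length_le (by simp) hp (by simp; omega)
    obtain ⟨D, hD⟩ : (k + 1) :: Zimin k <:+ Zimin k ++ [k + 1] ++ C :=
      List.suffix_of_suffix_length_le (List.suffix_append _ _) hs (by simp)
    have hC : C <+: Zimin k := by simpa using hp
    have hCk : k + 1 ∉ C := fun h => succ_notMem_zimin k (hC.subset h)
    obtain ⟨-, -, rfl⟩ := (List.append_cons_inj_of_notMem (succ_notMem_zimin k) hCk).mp
      (by simpa using hD.symm)
    simp [zimin_succ]

theorem exists_eq_zimin_of_append_eq_zimin {k : ℕ} {A U V : List ℕ}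
    (h : A ++ V ++ U = Zimin k) (hU : U <:+ A) (hV : V <+: Zimin k) :
    ∃ t ≤ k, V ++ U = Zimin t := by
  rcases U.eq_nil_or_concat with rfl | ⟨U, a, rfl⟩
  · exact exists_eq_zimin_of_prefix_of_suffix (by simpa using hV)
      ⟨A, by simpa using h⟩
  -- Otherwise `U U` ends `Zimin k`, or the last letter of `U` and the first of `V`, both `1`,
  -- are adjacent in `Zimin k`.
  exfalso
  obtain ⟨A, rfl⟩ := hU
  rcases V with _ | ⟨b, V⟩
  · exact zimin_squareFree k ⟨U ++ [a], by simp, A, [], by simpa using h⟩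
  obtain _ | k := k
  · simp [Zimin] at h
  obtain ⟨l, hl⟩ := zimin_succ_eq_cons k
  obtain ⟨l', hl'⟩ := zimin_succ_eq_concat k
  rw [hl] at hV
  obtain rfl : b = 1 := by simpa using hV.head
  rw [hl'] at h
  obtain rfl : a = 1 := by
    simpa [List.getLast?_cons, List.getLast?_append] using congrArg List.getLast? h
  refine zimin_squareFree (k + 1) ⟨[1], by simp, A ++ U, V ++ U ++ [1], ?_⟩
  rw [hl', ← h]
  simp

theorem drop_zimin_eq_zimin {k t : ℕ} (ht : t ≤ k) :
    (Zimin k).drop (2 ^ k - 2 ^ t) = Zimin t := by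
  have hlen : ((Zimin k).drop (2 ^ k - 2 ^ t)).length = (Zimin t).length := by
    have := Nat.one_le_two_pow (n := t)
    have := Nat.pow_le_pow_right two_pos ht
    simp only [List.length_drop, length_zimin]
    omega
  exact ((List.suffix_of_suffix_length_le (zimin_suffix_zimin ht) (List.drop_suffix _ _)
    hlen.ge).eq_of_length hlen.symm).symm

theorem hasSquare_insertAt_zimin_succ_succ_iff {k p : ℕ} (hp : p < 2 ^ k) :
    HasSquare (insertAt (Zimin (k + 1)) p (k + 1)) ↔ ∃ t ≤ k, p = 2 ^ k - 2 ^ t := by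
  have hZ := length_zimin k
  have hT := succ_notMem_zimin k
  have hsplit : insertAt (Zimin (k + 1)) p (k + 1) =
      (Zimin k).take p ++ (k + 1) :: ((Zimin k).drop p ++ (k + 1) :: Zimin k) := by
    rw [zimin_succ, insertAt_append_of_le_length (by omega)]
    simp [insertAt]
  rw [hsplit, hasSquare_append_cons_append_cons_iff
    (fun h => hT (List.mem_of_mem_take h)) (fun h => hT (List.mem_of_mem_drop h)) hT
    ((zimin_squareFree k).of_infix (List.take_prefix _ _).isInfix)
    ((zimin_squareFree k).of_infix (List.drop_suffix _ _).isInfix) (zimin_squareFree k)]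
  constructor
  · rintro ⟨U, V, hU, hV, hVU⟩
    obtain ⟨t, ht, hVU'⟩ := exists_eq_zimin_of_append_eq_zimin
      (by rw [List.append_assoc, ← hVU, List.take_append_drop]) hU hV
    have hlen := congrArg List.length (hVU.trans hVU')
    have := Nat.one_le_two_pow (n := t)
    simp only [List.length_drop, length_zimin, hZ] at hlen
    exact ⟨t, ht, by omega⟩
  · rintro ⟨t, ht, rfl⟩
    refine ⟨[], (Zimin k).drop (2 ^ k - 2 ^ t), List.nil_suffix, ?_, by simp⟩
    rw [drop_zimin_eq_zimin ht]
    exact zimin_prefix_zimin ht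

theorem succ_notMem_insertAt_zimin {k p x : ℕ} (hx : x ≤ k) :
    k + 1 ∉ insertAt (Zimin k) p x := by
  rw [mem_insertAt]
  rintro (h | h)
  · omega
  · exact succ_notMem_zimin k h

theorem squareFree_insertAt_zimin_succ_iff_of_lt {k p x : ℕ} (hx : x ≤ k) (hp : p < 2 ^ k) :
    SquareFree (insertAt (Zimin (k + 1)) p x) ↔ SquareFree (insertAt (Zimin k) p x) := by
  rw [SquareFree, SquareFree, zimin_succ,
    insertAt_append_of_le_length (by rw [length_zimin]; omega),
    hasSquare_append_cons_iff (succ_notMem_insertAt_zimin hx) (succ_notMem_zimin k)]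
  have := zimin_squareFree k
  tauto

theorem squareFree_insertAt_zimin_succ_add_iff {k p x : ℕ} (hx : x ≤ k) :
    SquareFree (insertAt (Zimin (k + 1)) (2 ^ k + p) x) ↔ SquareFree (insertAt (Zimin k) p x) := by
  rw [SquareFree, SquareFree, ← length_zimin_add_one, zimin_succ, insertAt_append_cons_add,
    hasSquare_append_cons_iff (succ_notMem_zimin k) (succ_notMem_insertAt_zimin hx)]
  have := zimin_squareFree k
  tauto

theorem squareFree_insertAt_zimin_succ_add_iff_sub {k p x : ℕ} (hp : p < 2 ^ k) :
    SquareFree (insertAt (Zimin (k + 1)) (2 ^ k + p) x) ↔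
      SquareFree (insertAt (Zimin (k + 1)) (2 ^ k - 1 - p) x) := by
  have : (Zimin (k + 1)).length - (2 ^ k + p) = 2 ^ k - 1 - p := by
    rw [length_zimin, pow_succ]; omega
  rw [SquareFree, SquareFree, hasSquare_insertAt_iff_of_reverse_eq (reverse_zimin _), this]

theorem Nat.count_congr {p q : ℕ → Prop} [DecidablePred p] [DecidablePred q] {n : ℕ}
    (h : ∀ k < n, p k ↔ q k) : Nat.count p n = Nat.count q n := by
  simp only [Nat.count_eq_card_filter_range]
  exact congrArg Finset.card (Finset.filter_congr fun k hk => h k (Finset.mem_range.mp hk))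

theorem Nat.count_reflect (p : ℕ → Prop) [DecidablePred p] (n : ℕ) :
    Nat.count (fun k => p (n - 1 - k)) n = Nat.count p n := by
  simp only [Nat.count_eq_card_filter_range, Finset.card_filter]
  exact Finset.sum_range_reflect (fun k => if p k then 1 else 0) n

section Counting

open Classical

theorem AE_eq_sum_count (n : ℕ) (W : List ℕ) :
    AE n W = ∑ x ∈ Finset.Icc 1 n,
      Nat.count (fun p => SquareFree (insertAt W p x)) (W.length + 1) := by
  have : {q : ℕ × ℕ | q.1 ≤ W.length ∧ 1 ≤ q.2 ∧ q.2 ≤ n ∧ SquareFree (insertAt W q.1 q.2)} =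
      ↑((Finset.range (W.length + 1) ×ˢ Finset.Icc 1 n).filter
        fun q => SquareFree (insertAt W q.1 q.2)) := by
    ext q
    simp [and_assoc]
  rw [AE, this, Set.ncard_coe_finset, Finset.card_filter, Finset.sum_product_right]
  simp only [Nat.count_eq_card_filter_range, Finset.card_filter]

theorem count_squareFree_insertAt_zimin_succ_of_le {k x : ℕ} (hx : x ≤ k) :
    Nat.count (fun p => SquareFree (insertAt (Zimin (k + 1)) p x)) (2 ^ (k + 1)) =
      2 * Nat.count (fun p => SquareFree (insertAt (Zimin k) p x)) (2 ^ k) := by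
  rw [pow_succ, mul_two, Nat.count_add, two_mul]
  congr 1
  · exact Nat.count_congr fun p hp => squareFree_insertAt_zimin_succ_iff_of_lt hx hp
  · simp only [squareFree_insertAt_zimin_succ_add_iff hx]

theorem count_squareFree_insertAt_zimin_succ_succ_left (k : ℕ) :
    Nat.count (fun p => SquareFree (insertAt (Zimin (k + 1)) p (k + 1))) (2 ^ k) =
      2 ^ k - (k + 1) := by
  have hbad : (Finset.range (2 ^ k)).filter
      (fun p => ¬ SquareFree (insertAt (Zimin (k + 1)) p (k + 1))) =
      (Finset.range (k + 1)).image (fun t => 2 ^ k - 2 ^ t) := by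
    ext p
    simp only [Finset.mem_filter, Finset.mem_range, Finset.mem_image, SquareFree, not_not]
    constructor
    · rintro ⟨hp, h⟩
      obtain ⟨t, ht, rfl⟩ := (hasSquare_insertAt_zimin_succ_succ_iff hp).mp h
      exact ⟨t, by omega, rfl⟩
    · rintro ⟨t, ht, rfl⟩
      have := Nat.one_le_two_pow (n := t)
      have := Nat.pow_le_pow_right two_pos (Nat.lt_succ_iff.mp ht)
      exact ⟨by omega, (hasSquare_insertAt_zimin_succ_succ_iff (by omega)).mpr ⟨t, by omega, rfl⟩⟩
  have hinj : Set.InjOn (fun t => 2 ^ k - 2 ^ t) (Finset.range (k + 1)) := by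
    intro s hs t ht hst
    simp only [Finset.coe_range, Set.mem_Iio] at hs ht
    have := Nat.pow_le_pow_right two_pos (Nat.lt_succ_iff.mp hs)
    have := Nat.pow_le_pow_right two_pos (Nat.lt_succ_iff.mp ht)
    exact Nat.pow_right_injective le_rfl (show 2 ^ s = 2 ^ t by simp only at hst; omega)
  have hcard := Finset.card_filter_add_card_filter_not (s := Finset.range (2 ^ k))
    (fun p => SquareFree (insertAt (Zimin (k + 1)) p (k + 1)))
  rw [hbad, Finset.card_image_of_injOn hinj, Finset.card_range, Finset.card_range] at hcard
  rw [Nat.count_eq_card_filter_range]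
  omega

theorem count_squareFree_insertAt_zimin_succ_succ (k : ℕ) :
    Nat.count (fun p => SquareFree (insertAt (Zimin (k + 1)) p (k + 1))) (2 ^ (k + 1)) =
      2 ^ (k + 1) - 2 * (k + 1) := by
  rw [pow_succ, mul_two, Nat.count_add,
    Nat.count_congr fun p hp => squareFree_insertAt_zimin_succ_add_iff_sub hp,
    Nat.count_reflect (fun p => SquareFree (insertAt (Zimin (k + 1)) p (k + 1))),
    count_squareFree_insertAt_zimin_succ_succ_left]
  omega

end Counting

theorem AE_zimin_recursion (n : ℕ) (hn : 4 ≤ n) :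
    AE n (Zimin n) = 2 ^ n - 2 * n + 2 * AE (n - 1) (Zimin (n - 1)) := by
  obtain ⟨k, rfl⟩ : ∃ k, n = k + 1 := ⟨n - 1, by omega⟩
  rw [Nat.add_sub_cancel, AE_eq_sum_count, AE_eq_sum_count, length_zimin_add_one,
    length_zimin_add_one,
    Finset.sum_Icc_succ_top (by omega), count_squareFree_insertAt_zimin_succ_succ,
    Finset.mul_sum, Finset.sum_congr rfl fun x hx =>
      count_squareFree_insertAt_zimin_succ_of_le (Finset.mem_Icc.mp hx).2]
  omega
end
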